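/- arXiv:1606.06371 — 3 statements merged into one kernel-verified Lean document; each statement's English description precedes it below -/
import Mathlib

section
/- Let n ≥ 1 and p ≥ 1 be natural numbers with x_k = π(2k−1)/(2n). Then (1/n)·∑_{k=1}^{n} cos(p·x_k) = 0 if p is not a multiple of 2n, and equals (−1)^l if p = 2ln for a positive integer l. -/
/-!
Put θ = pπ/(2n), so that p·x_k = (2k - 1)θ. The products 2 sin θ cos((2k - 1)θ) =
sin(2kθ) - sin(2(k - 1)θ) telescope, so 2 sin θ ∑ₖ cos((2k - 1)θ) = sin(2nθ) = sin(pπ) = 0,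
and sin θ ≠ 0 exactly when 2n ∤ p. If p = 2ln, every term is cos((2k - 1)lπ) = (-1)^l.
-/

open Finset Real

theorem two_mul_sin_mul_sum_cos_odd_mul (θ : ℝ) (n : ℕ) :
    2 * sin θ * ∑ k ∈ Icc 1 n, cos ((2 * (k : ℝ) - 1) * θ) = sin (2 * n * θ) := by
  induction n with
  | zero => simp
  | succ m ih =>
    rw [sum_Icc_succ_top (by omega), mul_add, ih]
    have h_top : 2 * ((m + 1 : ℕ) : ℝ) * θ = (2 * (m + 1) - 1) * θ + θ := by push_cast; ring
    have h_bot : 2 * (m : ℝ) * θ = (2 * (m + 1) - 1) * θ - θ := by ring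
    push_cast at h_top ⊢
    rw [h_top, h_bot, sin_add, sin_sub]
    ring

theorem sin_nat_mul_pi_div_eq_zero_iff {p m : ℕ} (hm : m ≠ 0) :
    sin (p * π / m) = 0 ↔ m ∣ p := by
  have hm' : (m : ℝ) ≠ 0 := by exact_mod_cast hm
  rw [sin_eq_zero_iff, ← Int.natCast_dvd_natCast]
  refine exists_congr fun j => ?_
  rw [eq_div_iff hm', mul_right_comm, mul_left_inj' pi_ne_zero, eq_comm, mul_comm]
  norm_cast

theorem sum_cos_odd_mul_pi_div_eq_zero {n p : ℕ} (hn : n ≠ 0) (hp : ¬ 2 * n ∣ p) :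
    ∑ k ∈ Icc 1 n, cos ((2 * (k : ℝ) - 1) * (p * π / (2 * n))) = 0 := by
  have h_sin : sin (p * π / (2 * n)) ≠ 0 := by
    exact_mod_cast (sin_nat_mul_pi_div_eq_zero_iff (by omega)).not.mpr hp
  have h_telescope := two_mul_sin_mul_sum_cos_odd_mul (p * π / (2 * n)) n
  rw [mul_div_cancel₀ _ (by positivity), sin_nat_mul_pi] at h_telescope
  simpa [h_sin] using h_telescope

theorem cos_odd_mul_nat_mul_pi (k : ℤ) (l : ℕ) : cos ((2 * k - 1) * (l * π)) = (-1) ^ l := by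
  have h : (2 * k - 1) * (l * π) = -(l * π) + ((k * l : ℤ) : ℝ) * (2 * π) := by push_cast; ring
  rw [h, cos_add_int_mul_two_pi, cos_neg, cos_nat_mul_pi]

theorem cos_average_aliasing_general (n p : ℕ) (hn : 1 ≤ n) :
    ((¬ (2 * n ∣ p)) →
      (1 / (n : ℝ)) * ∑ k ∈ Finset.Icc 1 n,
          Real.cos ((p : ℝ) * (Real.pi * (2 * (k : ℝ) - 1) / (2 * n))) = 0) ∧
    (∀ l : ℕ, 1 ≤ l → p = 2 * l * n →
      (1 / (n : ℝ)) * ∑ k ∈ Finset.Icc 1 n,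
          Real.cos ((p : ℝ) * (Real.pi * (2 * (k : ℝ) - 1) / (2 * n))) = (-1 : ℝ) ^ l) := by
  have hn₀ : (n : ℝ) ≠ 0 := by positivity
  constructor
  · intro hp
    have h_arg (k : ℕ) : (p : ℝ) * (π * (2 * k - 1) / (2 * n)) = (2 * k - 1) * (p * π / (2 * n)) := by
      ring
    simp only [h_arg, sum_cos_odd_mul_pi_div_eq_zero (by omega) hp, mul_zero]
  · rintro l - rfl
    have h_term (k : ℕ) : cos (((2 * l * n : ℕ) : ℝ) * (π * (2 * k - 1) / (2 * n))) = (-1) ^ l := by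
      have h_arg : ((2 * l * n : ℕ) : ℝ) * (π * (2 * k - 1) / (2 * n)) =
          (2 * ((k : ℤ) : ℝ) - 1) * (l * π) := by
        push_cast; field_simp
      rw [h_arg, cos_odd_mul_nat_mul_pi]
    simp only [h_term, sum_const, Nat.card_Icc, Nat.add_sub_cancel, nsmul_eq_mul]
    field_simp

/-- Average of cos(p x_k) over the midpoint grid x_k = π(2k-1)/(2n). -/
theorem cos_average_aliasing (n p : ℕ) (hn : 1 ≤ n) (hp : 1 ≤ p) :
    ((¬ (2 * n ∣ p)) →
      (1 / (n : ℝ)) * ∑ k ∈ Finset.Icc 1 n,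
          Real.cos ((p : ℝ) * (Real.pi * (2 * (k : ℝ) - 1) / (2 * n))) = 0) ∧
    (∀ l : ℕ, 1 ≤ l → p = 2 * l * n →
      (1 / (n : ℝ)) * ∑ k ∈ Finset.Icc 1 n,
          Real.cos ((p : ℝ) * (Real.pi * (2 * (k : ℝ) - 1) / (2 * n))) = (-1 : ℝ) ^ l) :=
  cos_average_aliasing_general n p hn
end

section
/- Let 0 < α < 1, T > 0, p ≥ 1, and let R : [0,T] → ℝ be continuous with R_0 := inf_{[0,T]} R > 0 and ‖R‖_∞ := sup_{[0,T]} |R|. Assume additionally that 0 ≤ E_{α,α}(−x) and E_{α,1}(−p²T^α) ≤ E_{α,1}(−T^α) for all such p (complete-monotonicity facts about the Mittag-Leffler function). Then R_0·(1 − E_{α,1}(−T^α))/p² ≤ ∫_0^T (T−s)^{α−1} E_{α,α}(−p²(T−s)^α) R(s) ds ≤ ‖R‖_∞/p². -/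
/-- The two-parameter Mittag-Leffler function E_{a,b}(z) = ∑ z^j / Γ(aj+b). -/
noncomputable def mittagLeffler (a b z : ℝ) : ℝ :=
  ∑' j : ℕ, z ^ j / Real.Gamma (a * j + b)

/-!
The kernel `K s = (T - s)^(α-1) E_{α,α}(-p² (T - s)^α)` is nonnegative by assumption, and
integrating its power series term by term (each term is a Beta integral) gives
`∫₀ᵀ K = (1 - E_{α,1}(-p² T^α)) / p²`. Hence the integral of `K R` lies between `R0` and `Rsup`
times this value; the lower bound then follows from the monotonicity assumption, the upper one
from `E_{α,1}(-x) ≥ 0`.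

That positivity comes from the Volterra equation `Γ(α) (1 - u t) = ∫₀ᵗ (t - s)^(α-1) u s ds`
satisfied by `u t = E_{α,1}(-t^α)`, which is decreasing because
`1 - u t = ∫₀ᵗ v^(α-1) E_{α,α}(-v^α) dv`. If `u t₁ < 0`, let `u t₀ = 0` with `t₀ < t₁`: since
`u ≥ 0` before `t₀`, `u ≤ 0` after it, and the kernel `(t - s)^(α-1)` decreases in `t` for
`α < 1`, the equation at `t₁` is bounded by the one at `t₀`, giving `Γ(α) (1 - u t₁) ≤ Γ(α)`.
-/

open Real Filter Topology Set MeasureTheory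

-- Wendel's inequality, from the log-convexity of `Γ`.
theorem Real.Gamma_add_one_le_Gamma_add_mul_rpow {α c : ℝ} (hα0 : 0 < α) (hα1 : α < 1)
    (hc : 0 < c + α) : Gamma (c + 1) ≤ Gamma (c + α) * (c + α) ^ (1 - α) := by
  have hconv := Gamma_mul_add_mul_le_rpow_Gamma_mul_rpow_Gamma hc (by linarith : 0 < c + α + 1)
    hα0 (by linarith) (add_sub_cancel α 1)
  have hG : 0 < Gamma (c + α) := Gamma_pos_of_pos hc
  rw [show α * (c + α) + (1 - α) * (c + α + 1) = c + 1 by ring, Gamma_add_one hc.ne',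
    mul_rpow hc.le hG.le, mul_left_comm, ← rpow_add hG, add_sub_cancel, rpow_one] at hconv
  linarith

theorem Real.tendsto_Gamma_div_Gamma_add {α : ℝ} (hα0 : 0 < α) (hα1 : α < 1) :
    Tendsto (fun c => Gamma c / Gamma (c + α)) atTop (𝓝 0) := by
  have hbound : Tendsto (fun c : ℝ => (c + α) / c * (c + α) ^ (-α)) atTop (𝓝 0) := by
    have h1 : Tendsto (fun c : ℝ => (c + α) / c) atTop (𝓝 1) := by
      have h := (tendsto_inv_atTop_zero.const_mul α).const_add (1 : ℝ)
      rw [mul_zero, add_zero] at h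
      refine h.congr' ?_
      filter_upwards [eventually_gt_atTop 0] with c hc
      field_simp
    have h2 := (tendsto_rpow_neg_atTop hα0).comp (tendsto_atTop_add_const_right _ α tendsto_id)
    simpa using h1.mul h2
  refine squeeze_zero' ?_ ?_ hbound
  · filter_upwards [eventually_gt_atTop 0] with c hc
    exact div_nonneg (Gamma_pos_of_pos hc).le (Gamma_pos_of_pos (by linarith)).le
  · filter_upwards [eventually_gt_atTop 0] with c hc
    have hca : 0 < c + α := by linarith
    have hw := Gamma_add_one_le_Gamma_add_mul_rpow hα0 hα1 hca
    rw [Gamma_add_one hc.ne'] at hw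
    rw [div_le_iff₀ (Gamma_pos_of_pos hca)]
    calc Gamma c = c * Gamma c / c := by field_simp
      _ ≤ Gamma (c + α) * (c + α) ^ (1 - α) / c := by gcongr
      _ = (c + α) / c * (c + α) ^ (-α) * Gamma (c + α) := by
        rw [show 1 - α = 1 + -α by ring, rpow_add hca, rpow_one]; ring

noncomputable def mittagLefflerSeries (α b : ℝ) : FormalMultilinearSeries ℝ ℝ ℝ :=
  FormalMultilinearSeries.ofScalars ℝ fun j : ℕ => (Gamma (α * j + b))⁻¹

theorem mittagLefflerSeries_radius {α : ℝ} (hα0 : 0 < α) (hα1 : α < 1) (b : ℝ) :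
    (mittagLefflerSeries α b).radius = ⊤ := by
  have htend : Tendsto (fun j : ℕ => α * j + b) atTop atTop :=
    tendsto_atTop_add_const_right _ b (tendsto_natCast_atTop_atTop.const_mul_atTop hα0)
  have hpos : ∀ᶠ j : ℕ in atTop, 0 < α * j + b := htend.eventually_gt_atTop 0
  refine FormalMultilinearSeries.ofScalars_radius_eq_top_of_tendsto _ _
    (hpos.mono fun j hj => inv_ne_zero (Gamma_pos_of_pos hj).ne') ?_
  refine ((tendsto_Gamma_div_Gamma_add hα0 hα1).comp htend).congr' ?_
  filter_upwards [hpos] with j hj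
  have hj' : 0 < α * j + b + α := by linarith
  rw [Function.comp_apply, norm_inv, norm_inv, Real.norm_of_nonneg (Gamma_pos_of_pos hj).le,
    Nat.cast_succ, show α * (j + 1 : ℝ) + b = α * j + b + α by ring,
    Real.norm_of_nonneg (Gamma_pos_of_pos hj').le, inv_div_inv]

theorem mittagLeffler_eq_sum (α b : ℝ) :
    mittagLeffler α b = (mittagLefflerSeries α b).sum := by
  funext z
  simp only [mittagLeffler, mittagLefflerSeries, ← FormalMultilinearSeries.ofScalarsSum.eq_1,
    FormalMultilinearSeries.ofScalars_sum_eq, smul_eq_mul, div_eq_inv_mul]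

theorem summable_mittagLeffler {α : ℝ} (hα0 : 0 < α) (hα1 : α < 1) (b z : ℝ) :
    Summable fun j : ℕ => z ^ j / Gamma (α * j + b) := by
  have h := (mittagLefflerSeries α b).summable (x := z)
    (by simp [mittagLefflerSeries_radius hα0 hα1 b])
  simpa only [mittagLefflerSeries, FormalMultilinearSeries.ofScalars_apply_eq, smul_eq_mul,
    div_eq_inv_mul] using h

theorem continuous_mittagLeffler {α : ℝ} (hα0 : 0 < α) (hα1 : α < 1) (b : ℝ) :
    Continuous (mittagLeffler α b) := by
  have h := (mittagLefflerSeries α b).continuousOn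
  rw [mittagLefflerSeries_radius hα0 hα1 b, Metric.eball_top, continuousOn_univ] at h
  rwa [mittagLeffler_eq_sum]

theorem mittagLeffler_zero (α b : ℝ) : mittagLeffler α b 0 = (Gamma b)⁻¹ := by
  rw [mittagLeffler, tsum_eq_single 0 fun j hj => by rw [zero_pow hj, zero_div]]
  simp

theorem mittagLeffler_eq_inv_Gamma_add_mul {α : ℝ} (hα0 : 0 < α) (hα1 : α < 1) (b z : ℝ) :
    mittagLeffler α b z = (Gamma b)⁻¹ + z * mittagLeffler α (b + α) z := by
  rw [mittagLeffler, (summable_mittagLeffler hα0 hα1 b z).tsum_eq_zero_add, mittagLeffler,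
    ← tsum_mul_left]
  congr 1
  · simp
  · refine tsum_congr fun j => ?_
    rw [pow_succ', Nat.cast_succ, show α * (j + 1 : ℝ) + b = α * j + (b + α) by ring,
      mul_div_assoc]

theorem integral_sub_rpow_mul_rpow {β γ t : ℝ} (hβ : 0 < β) (hγ : 0 < γ) (ht : 0 < t) :
    ∫ s in (0 : ℝ)..t, (t - s) ^ (β - 1) * s ^ (γ - 1)
      = Gamma β * Gamma γ / Gamma (β + γ) * t ^ (β + γ - 1) := by
  have hscaled := Complex.betaIntegral_scaled γ β ht
  have hbeta := Complex.Gamma_mul_Gamma_eq_betaIntegral (s := γ) (t := β)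
    (by simpa using hγ) (by simpa using hβ)
  have hcast :
      ∫ x in (0 : ℝ)..t, (x : ℂ) ^ ((γ : ℂ) - 1) * ((t : ℂ) - x) ^ ((β : ℂ) - 1)
        = ((∫ s in (0 : ℝ)..t, (t - s) ^ (β - 1) * s ^ (γ - 1) : ℝ) : ℂ) := by
    rw [← intervalIntegral.integral_ofReal]
    refine intervalIntegral.integral_congr fun x hx => ?_
    rw [uIcc_of_le ht.le] at hx
    have hxt : 0 ≤ t - x := by linarith [hx.2]
    push_cast
    rw [Complex.ofReal_cpow hx.1, Complex.ofReal_cpow hxt, mul_comm]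
    push_cast; ring_nf
  have hΓ : Complex.Gamma ((γ : ℂ) + β) ≠ 0 := by
    rw [← Complex.ofReal_add, Complex.Gamma_ofReal]
    exact_mod_cast (Gamma_pos_of_pos (add_pos hγ hβ)).ne'
  apply Complex.ofReal_injective
  have hB :
      Complex.betaIntegral γ β = Complex.Gamma γ * Complex.Gamma β / Complex.Gamma (γ + β) :=
    eq_div_of_mul_eq hΓ (by rw [hbeta, mul_comm])
  rw [← hcast, hscaled, hB]
  push_cast
  rw [Complex.ofReal_cpow ht.le, ← Complex.Gamma_ofReal, ← Complex.Gamma_ofReal,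
    ← Complex.Gamma_ofReal]
  push_cast
  ring_nf

theorem intervalIntegrable_sub_rpow_mul {r : ℝ} (hr : -1 < r) (t : ℝ) {g : ℝ → ℝ}
    {a b : ℝ} (hg : ContinuousOn g (uIcc a b)) :
    IntervalIntegrable (fun s => (t - s) ^ r * g s) volume a b := by
  refine IntervalIntegrable.mul_continuousOn ?_ hg
  simpa using
    (intervalIntegral.intervalIntegrable_rpow' hr (a := t - a) (b := t - b)).comp_sub_left t

theorem intervalIntegrable_sub_rpow_mul_rpow {r q t : ℝ} (hr : -1 < r) (hq : -1 < q)
    (ht : 0 < t) : IntervalIntegrable (fun s => (t - s) ^ r * s ^ q) volume 0 t := by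
  have hmid : 0 < t / 2 := half_pos ht
  refine IntervalIntegrable.trans (b := t / 2) ?_ ?_
  · refine (intervalIntegral.intervalIntegrable_rpow' hq).continuousOn_mul fun s hs => ?_
    rw [uIcc_of_le hmid.le] at hs
    exact (continuousAt_const.sub continuousAt_id).rpow_const
      (Or.inl (ne_of_gt (by linarith [hs.2] : 0 < t - s))) |>.continuousWithinAt
  · refine intervalIntegrable_sub_rpow_mul hr t fun s hs => ?_
    rw [uIcc_of_le (by linarith)] at hs
    exact (continuousAt_id.rpow_const
      (Or.inl (ne_of_gt (by linarith [hs.1] : 0 < s)))).continuousWithinAt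

section RiemannLiouville

variable {α β b t : ℝ}

theorem integral_sub_rpow_mul_mittagLeffler_term (hα0 : 0 < α) (hβ : 0 < β) (hb : 0 < b)
    (ht : 0 < t) (l : ℝ) (j : ℕ) :
    ∫ s in (0 : ℝ)..t, (t - s) ^ (β - 1) * (l ^ j / Gamma (α * j + b) * s ^ (α * j + b - 1))
      = Gamma β * t ^ (b + β - 1) * ((l * t ^ α) ^ j / Gamma (α * j + (b + β))) := by
  have hγ : 0 < α * j + b := by positivity
  simp_rw [mul_left_comm _ (l ^ j / _)]
  rw [intervalIntegral.integral_const_mul, integral_sub_rpow_mul_rpow hβ hγ ht,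
    show β + (α * j + b) = α * j + (b + β) by ring,
    show α * j + (b + β) - 1 = (b + β - 1) + α * j by ring, rpow_add ht, rpow_mul_natCast ht.le,
    mul_pow]
  have := (Gamma_pos_of_pos hγ).ne'
  field_simp

-- The classical Riemann–Liouville integral of a Mittag-Leffler function, done term by term.
theorem integral_sub_rpow_mul_rpow_mul_mittagLeffler (hα0 : 0 < α) (hα1 : α < 1) (hβ : 0 < β)
    (hb : 0 < b) (ht : 0 < t) (l : ℝ) :
    ∫ s in (0 : ℝ)..t, (t - s) ^ (β - 1) * (s ^ (b - 1) * mittagLeffler α b (l * s ^ α))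
      = Gamma β * t ^ (b + β - 1) * mittagLeffler α (b + β) (l * t ^ α) := by
  set F : ℕ → ℝ → ℝ := fun j s =>
    (t - s) ^ (β - 1) * (l ^ j / Gamma (α * j + b) * s ^ (α * j + b - 1)) with hF
  have hseries :
      EqOn (fun s => (t - s) ^ (β - 1) * (s ^ (b - 1) * mittagLeffler α b (l * s ^ α)))
        (fun s => ∑' j, F j s) (Ioc 0 t) := by
    intro s hs
    simp only [hF, mittagLeffler, ← tsum_mul_left]
    refine tsum_congr fun j => ?_
    rw [mul_pow, ← rpow_mul_natCast hs.1.le, show α * j + b - 1 = (b - 1) + α * j by ring,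
      rpow_add hs.1]
    ring
  have hint : ∀ j, Integrable (F j) (volume.restrict (Ioc 0 t)) := fun j =>
    ((intervalIntegrable_sub_rpow_mul_rpow (r := β - 1) (q := α * j + b - 1) (by linarith)
      (by linarith [(by positivity : (0 : ℝ) ≤ α * j)]) ht).const_mul
      (l ^ j / Gamma (α * j + b))).1.congr (by
        filter_upwards with s; simp only [hF]; ring)
  have hnorm : ∀ j, ∫ s in Ioc 0 t, ‖F j s‖
      = Gamma β * t ^ (b + β - 1) * ((|l| * t ^ α) ^ j / Gamma (α * j + (b + β))) := by
    intro j
    rw [← integral_sub_rpow_mul_mittagLeffler_term hα0 hβ hb ht |l| j,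
      intervalIntegral.integral_of_le ht.le]
    refine setIntegral_congr_fun measurableSet_Ioc fun s hs => ?_
    have : 0 < Gamma (α * j + b) := Gamma_pos_of_pos (by positivity)
    simp only [hF, norm_mul, norm_div, norm_pow, Real.norm_eq_abs, abs_of_pos this,
      abs_of_nonneg (rpow_nonneg (sub_nonneg.2 hs.2) _), abs_of_nonneg (rpow_nonneg hs.1.le _)]
  have hsum : Summable fun j => ∫ s in Ioc 0 t, ‖F j s‖ := by
    simp only [hnorm]
    exact (summable_mittagLeffler hα0 hα1 _ _).mul_left _
  rw [intervalIntegral.integral_of_le ht.le, setIntegral_congr_fun measurableSet_Ioc hseries,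
    ← integral_tsum_of_summable_integral_norm hint hsum, mittagLeffler, ← tsum_mul_left]
  refine tsum_congr fun j => ?_
  rw [← intervalIntegral.integral_of_le ht.le,
    integral_sub_rpow_mul_mittagLeffler_term hα0 hβ hb ht]

end RiemannLiouville

section CompleteMonotonicity

variable {α : ℝ}

theorem mul_integral_rpow_mul_mittagLeffler (hα0 : 0 < α) (hα1 : α < 1) {t : ℝ} (ht : 0 ≤ t)
    (l : ℝ) :
    l * ∫ v in (0 : ℝ)..t, v ^ (α - 1) * mittagLeffler α α (l * v ^ α)
      = mittagLeffler α 1 (l * t ^ α) - 1 := by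
  rcases ht.eq_or_lt with rfl | ht
  · simp [zero_rpow hα0.ne', mittagLeffler_zero]
  have h := integral_sub_rpow_mul_rpow_mul_mittagLeffler hα0 hα1 one_pos hα0 ht l
  simp only [sub_self, rpow_zero, one_mul, Gamma_one, add_sub_cancel_right] at h
  rw [h, mittagLeffler_eq_inv_Gamma_add_mul hα0 hα1 1, Gamma_one, inv_one, add_comm 1 α]
  ring

theorem integral_sub_rpow_mul_mittagLeffler_neg_mul_sub_rpow (hα0 : 0 < α) (hα1 : α < 1)
    {t c : ℝ} (ht : 0 ≤ t) (hc : 0 < c) :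
    ∫ s in (0 : ℝ)..t, (t - s) ^ (α - 1) * mittagLeffler α α (-c * (t - s) ^ α)
      = (1 - mittagLeffler α 1 (-c * t ^ α)) / c := by
  rw [intervalIntegral.integral_comp_sub_left
      (fun v => v ^ (α - 1) * mittagLeffler α α (-c * v ^ α)), sub_self, sub_zero,
    eq_div_iff hc.ne']
  linarith [mul_integral_rpow_mul_mittagLeffler hα0 hα1 ht (-c)]

theorem integral_sub_rpow_mul_mittagLeffler_one_neg_rpow (hα0 : 0 < α) (hα1 : α < 1) {t : ℝ}
    (ht : 0 ≤ t) :
    ∫ s in (0 : ℝ)..t, (t - s) ^ (α - 1) * mittagLeffler α 1 (-s ^ α)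
      = Gamma α * (1 - mittagLeffler α 1 (-t ^ α)) := by
  rcases ht.eq_or_lt with rfl | ht
  · simp [zero_rpow hα0.ne', mittagLeffler_zero]
  have h := integral_sub_rpow_mul_rpow_mul_mittagLeffler hα0 hα1 hα0 one_pos ht (-1)
  simp only [sub_self, rpow_zero, one_mul, neg_one_mul, add_sub_cancel_left] at h
  rw [h, mittagLeffler_eq_inv_Gamma_add_mul hα0 hα1 1, Gamma_one, inv_one]
  ring

theorem antitoneOn_mittagLeffler_one_neg_rpow (hα0 : 0 < α) (hα1 : α < 1)
    (hEpos : ∀ x : ℝ, 0 ≤ x → 0 ≤ mittagLeffler α α (-x)) :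
    AntitoneOn (fun t => mittagLeffler α 1 (-t ^ α)) (Ici 0) := by
  intro s hs t ht hst
  have hint : ∀ a b : ℝ, IntervalIntegrable
      (fun v => v ^ (α - 1) * mittagLeffler α α (-v ^ α)) volume a b := fun a b =>
    (intervalIntegral.intervalIntegrable_rpow' (by linarith)).mul_continuousOn
      ((continuous_mittagLeffler hα0 hα1 α).comp
        (continuous_rpow_const hα0.le).neg).continuousOn
  have hgap : 0 ≤ ∫ v in s..t, v ^ (α - 1) * mittagLeffler α α (-v ^ α) :=
    intervalIntegral.integral_nonneg hst fun v hv =>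
      have hv0 : 0 ≤ v := le_trans hs hv.1
      mul_nonneg (rpow_nonneg hv0 _) (hEpos _ (rpow_nonneg hv0 α))
  have hs' := mul_integral_rpow_mul_mittagLeffler hα0 hα1 hs (-1)
  have ht' := mul_integral_rpow_mul_mittagLeffler hα0 hα1 (le_trans hs hst) (-1)
  simp only [neg_one_mul] at hs' ht'
  rw [← intervalIntegral.integral_add_adjacent_intervals (hint 0 s) (hint s t)] at ht'
  dsimp only
  linarith

theorem mittagLeffler_one_neg_nonneg (hα0 : 0 < α) (hα1 : α < 1)
    (hEpos : ∀ x : ℝ, 0 ≤ x → 0 ≤ mittagLeffler α α (-x)) {x : ℝ} (hx : 0 ≤ x) :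
    0 ≤ mittagLeffler α 1 (-x) := by
  set u : ℝ → ℝ := fun t => mittagLeffler α 1 (-t ^ α) with hu
  have hu_cont : Continuous u :=
    (continuous_mittagLeffler hα0 hα1 1).comp (continuous_rpow_const hα0.le).neg
  have hu_anti : AntitoneOn u (Ici 0) := antitoneOn_mittagLeffler_one_neg_rpow hα0 hα1 hEpos
  have hu0 : u 0 = 1 := by simp [hu, zero_rpow hα0.ne', mittagLeffler_zero]
  obtain ⟨t₁, ht₁, rfl⟩ : ∃ t₁, 0 ≤ t₁ ∧ t₁ ^ α = x :=
    ⟨x ^ α⁻¹, rpow_nonneg hx _, by rw [← rpow_mul hx, inv_mul_cancel₀ hα0.ne', rpow_one]⟩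
  change 0 ≤ u t₁
  by_contra! hneg
  obtain ⟨t₀, ⟨ht₀, ht₀₁⟩, hzero⟩ : ∃ t₀ ∈ Icc 0 t₁, u t₀ = 0 :=
    intermediate_value_Icc' ht₁ hu_cont.continuousOn ⟨hneg.le, by rw [hu0]; exact zero_le_one⟩
  have hint : ∀ a b, IntervalIntegrable (fun s => (t₁ - s) ^ (α - 1) * u s) volume a b :=
    fun a b => intervalIntegrable_sub_rpow_mul (by linarith) t₁ hu_cont.continuousOn
  have hleft : ∫ s in (0 : ℝ)..t₀, (t₁ - s) ^ (α - 1) * u s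
      ≤ ∫ s in (0 : ℝ)..t₀, (t₀ - s) ^ (α - 1) * u s := by
    refine intervalIntegral.integral_mono_on ht₀ (hint 0 t₀)
      (intervalIntegrable_sub_rpow_mul (by linarith) _ hu_cont.continuousOn) fun s hs => ?_
    have hus : 0 ≤ u s := hzero ▸ hu_anti hs.1 ht₀ hs.2
    rcases hs.2.lt_or_eq with hst | rfl
    · exact mul_le_mul_of_nonneg_right
        (rpow_le_rpow_of_nonpos (by linarith) (by linarith) (by linarith)) hus
    · simp [hzero]
  have hright : 0 ≤ ∫ s in t₀..t₁, (t₁ - s) ^ (α - 1) * -u s :=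
    intervalIntegral.integral_nonneg ht₀₁ fun s hs =>
      mul_nonneg (rpow_nonneg (by linarith [hs.2]) _)
        (neg_nonneg.2 (hzero ▸ hu_anti ht₀ (ht₀.trans hs.1) hs.1))
  have hsplit := intervalIntegral.integral_add_adjacent_intervals (hint 0 t₀) (hint t₀ t₁)
  have hV₀ := integral_sub_rpow_mul_mittagLeffler_one_neg_rpow hα0 hα1 ht₀
  have hV₁ := integral_sub_rpow_mul_mittagLeffler_one_neg_rpow hα0 hα1 ht₁
  simp only [hu, mul_neg, intervalIntegral.integral_neg] at hzero hneg hleft hright hsplit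
  rw [hV₀, hzero] at hleft
  rw [hV₁] at hsplit
  nlinarith [mul_pos (Gamma_pos_of_pos hα0) (neg_pos.2 hneg)]

end CompleteMonotonicity

section Sandwich

variable {K R : ℝ → ℝ} {a b : ℝ}

theorem mul_integral_le_integral_mul_of_le (hab : a ≤ b) (hK : IntervalIntegrable K volume a b)
    (hKR : IntervalIntegrable (fun s => K s * R s) volume a b) (hK0 : ∀ s ∈ Icc a b, 0 ≤ K s)
    {m : ℝ} (hm : ∀ s ∈ Icc a b, m ≤ R s) :
    m * ∫ s in a..b, K s ≤ ∫ s in a..b, K s * R s := by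
  rw [← intervalIntegral.integral_const_mul]
  refine intervalIntegral.integral_mono_on hab (hK.const_mul m) hKR fun s hs => ?_
  rw [mul_comm]
  exact mul_le_mul_of_nonneg_left (hm s hs) (hK0 s hs)

theorem integral_mul_le_mul_integral_of_le (hab : a ≤ b) (hK : IntervalIntegrable K volume a b)
    (hKR : IntervalIntegrable (fun s => K s * R s) volume a b) (hK0 : ∀ s ∈ Icc a b, 0 ≤ K s)
    {M : ℝ} (hM : ∀ s ∈ Icc a b, R s ≤ M) :
    ∫ s in a..b, K s * R s ≤ M * ∫ s in a..b, K s := by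
  rw [← intervalIntegral.integral_const_mul]
  refine intervalIntegral.integral_mono_on hab hKR (hK.const_mul M) fun s hs => ?_
  rw [mul_comm M]
  exact mul_le_mul_of_nonneg_left (hM s hs) (hK0 s hs)

end Sandwich

/-- Two-sided bounds on the forward operator eigenvalues. -/
theorem forward_eigenvalue_bounds (α T R0 Rsup : ℝ) (p : ℕ) (R : ℝ → ℝ)
    (hα0 : 0 < α) (hα1 : α < 1) (hT : 0 < T) (hp : 1 ≤ p)
    (hRcont : ContinuousOn R (Set.Icc 0 T))
    (hR0 : 0 < R0) (hRinf : ∀ s ∈ Set.Icc 0 T, R0 ≤ R s)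
    (hRsup : ∀ s ∈ Set.Icc 0 T, |R s| ≤ Rsup)
    (hEpos : ∀ x : ℝ, 0 ≤ x → 0 ≤ mittagLeffler α α (-x))
    (hEmono : ∀ q : ℕ, 1 ≤ q →
      mittagLeffler α 1 (-(q : ℝ) ^ 2 * T ^ α) ≤ mittagLeffler α 1 (-T ^ α)) :
    R0 * (1 - mittagLeffler α 1 (-T ^ α)) / (p : ℝ) ^ 2
      ≤ (∫ s in (0 : ℝ)..T,
          (T - s) ^ (α - 1) * mittagLeffler α α (-(p : ℝ) ^ 2 * (T - s) ^ α) * R s) ∧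
    (∫ s in (0 : ℝ)..T,
          (T - s) ^ (α - 1) * mittagLeffler α α (-(p : ℝ) ^ 2 * (T - s) ^ α) * R s)
      ≤ Rsup / (p : ℝ) ^ 2 := by
  have hc : 0 < (p : ℝ) ^ 2 := pow_pos (Nat.cast_pos.2 hp) 2
  set K : ℝ → ℝ := fun s => (T - s) ^ (α - 1) * mittagLeffler α α (-(p : ℝ) ^ 2 * (T - s) ^ α)
  have hK0 : ∀ s ∈ Icc 0 T, 0 ≤ K s := fun s hs =>
    mul_nonneg (rpow_nonneg (sub_nonneg.2 hs.2) _)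
      (by simpa only [neg_mul] using hEpos _ (mul_nonneg hc.le (rpow_nonneg (sub_nonneg.2 hs.2) α)))
  have hKint : IntervalIntegrable K volume 0 T :=
    intervalIntegrable_sub_rpow_mul (by linarith) T ((continuous_mittagLeffler hα0 hα1 α).comp
      (continuous_const.mul ((continuous_const.sub continuous_id).rpow_const
        fun _ => Or.inr hα0.le))).continuousOn
  have hKRint : IntervalIntegrable (fun s => K s * R s) volume 0 T :=
    hKint.mul_continuousOn (by rwa [uIcc_of_le hT.le])
  have hKval :
      ∫ s in (0 : ℝ)..T, K s = (1 - mittagLeffler α 1 (-(p : ℝ) ^ 2 * T ^ α)) / (p : ℝ) ^ 2 :=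
    integral_sub_rpow_mul_mittagLeffler_neg_mul_sub_rpow hα0 hα1 hT.le hc
  have hE1 : 0 ≤ mittagLeffler α 1 (-(p : ℝ) ^ 2 * T ^ α) := by
    simpa only [neg_mul] using mittagLeffler_one_neg_nonneg hα0 hα1 hEpos (by positivity)
  have hRsup0 : 0 ≤ Rsup := (abs_nonneg _).trans (hRsup 0 ⟨le_rfl, hT.le⟩)
  constructor
  · calc R0 * (1 - mittagLeffler α 1 (-T ^ α)) / (p : ℝ) ^ 2
        ≤ R0 * ((1 - mittagLeffler α 1 (-(p : ℝ) ^ 2 * T ^ α)) / (p : ℝ) ^ 2) := by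
          rw [mul_div_assoc]; gcongr; linarith [hEmono p hp]
      _ ≤ _ := hKval ▸ mul_integral_le_integral_mul_of_le hT.le hKint hKRint hK0 hRinf
  · calc ∫ s in (0 : ℝ)..T, K s * R s
        ≤ Rsup * ((1 - mittagLeffler α 1 (-(p : ℝ) ^ 2 * T ^ α)) / (p : ℝ) ^ 2) :=
          hKval ▸ integral_mul_le_mul_integral_of_le hT.le hKint hKRint hK0
            fun s hs => (le_abs_self _).trans (hRsup s hs)
      _ ≤ Rsup * (1 / (p : ℝ) ^ 2) := by gcongr; linarith
      _ = Rsup / (p : ℝ) ^ 2 := mul_one_div _ _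
end

section
/- Let (c_q)_{q≥0} be an absolutely summable real sequence, n ≥ 1, x_k = π(2k−1)/(2n), and u(x) = c_0/√π + ∑_{q≥1} c_q √(2/π) cos(qx). Then (1/n)∑_{k=1}^{n} u(x_k) = c_0/√π + √(2/π)·∑_{l=1}^{∞} (−1)^l c_{2ln}. -/
/-!
Each mode `cos (m x)` averages over the midpoint grid to `(-1) ^ (m / 2n)` when `2n ∣ m` and
to `0` otherwise: multiplying the grid sum by `2 sin (m π / 2n)` makes it telescope to
`sin (m π) = 0`. Absolute summability of `c` lets the finite average pass through the cosine
series, so only the modes `m = 2 n l` survive.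
-/

open Finset

lemma two_mul_sin_mul_sum_cos_odd (θ : ℝ) (n : ℕ) :
    2 * Real.sin θ * ∑ k ∈ Icc 1 n, Real.cos ((2 * (k : ℝ) - 1) * θ)
      = Real.sin (2 * n * θ) := by
  induction n with
  | zero => simp
  | succ n ih =>
    rw [sum_Icc_succ_top (by omega), mul_add, ih, Real.two_mul_sin_mul_cos]
    push_cast
    rw [show θ - (2 * ((n : ℝ) + 1) - 1) * θ = -(2 * n * θ) by ring, Real.sin_neg]
    ring_nf

lemma sin_natCast_mul_pi_div_ne_zero {m d : ℕ} (hd : d ≠ 0) (hdm : ¬ d ∣ m) :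
    Real.sin (m * Real.pi / d) ≠ 0 := by
  rw [Ne, Real.sin_eq_zero_iff]
  rintro ⟨j, hj⟩
  field_simp at hj
  exact hdm (Int.natCast_dvd_natCast.1 ⟨j, by exact_mod_cast hj.symm.trans (mul_comm _ _)⟩)

lemma sum_cos_mul_midpoint {n : ℕ} (hn : n ≠ 0) (m : ℕ) :
    ∑ k ∈ Icc 1 n, Real.cos (m * (Real.pi * (2 * (k : ℝ) - 1) / (2 * n)))
      = if 2 * n ∣ m then n * (-1 : ℝ) ^ (m / (2 * n)) else 0 := by
  have hterm : ∀ k : ℕ, m * (Real.pi * (2 * (k : ℝ) - 1) / (2 * n))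
      = (2 * (k : ℝ) - 1) * (m * Real.pi / (2 * n)) := fun k => by ring
  simp_rw [hterm]
  split_ifs with hdm
  · obtain ⟨l, rfl⟩ := hdm
    have hθ : ((2 * n * l : ℕ) : ℝ) * Real.pi / (2 * n) = l * Real.pi := by
      push_cast; field_simp
    have hcos (k : ℕ) : Real.cos ((2 * (k : ℝ) - 1) * (l * Real.pi)) = (-1) ^ l := by
      rw [show (2 * (k : ℝ) - 1) * (l * Real.pi)
          = ((2 * k * l : ℕ) : ℝ) * Real.pi - l * Real.pi by push_cast; ring,
        Real.cos_nat_mul_pi_sub, Real.cos_nat_mul_pi,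
        Even.neg_one_pow ⟨k * l, by ring⟩, one_mul]
    rw [hθ, sum_congr rfl fun k _ => hcos k, sum_const, Nat.card_Icc,
      Nat.mul_div_cancel_left l (by omega), nsmul_eq_mul, Nat.add_sub_cancel]
  · have hsin := sin_natCast_mul_pi_div_ne_zero (by omega : 2 * n ≠ 0) hdm
    push_cast at hsin
    have h := two_mul_sin_mul_sum_cos_odd (m * Real.pi / (2 * n)) n
    rw [show 2 * (n : ℝ) * (m * Real.pi / (2 * n)) = m * Real.pi by field_simp,
      Real.sin_nat_mul_pi] at h
    simpa [hsin] using h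

lemma sum_tsum_mul_comm_of_abs_le {ι β : Type*} (t : Finset ι) {c : β → ℝ}
    (hc : Summable fun q => |c q|) {f : β → ι → ℝ} {B : ℝ} (hf : ∀ q k, |f q k| ≤ B) :
    ∑ k ∈ t, ∑' q, c q * f q k = ∑' q, c q * ∑ k ∈ t, f q k := by
  have hsum : ∀ k, Summable fun q => c q * f q k := fun k =>
    (hc.mul_right B).of_norm_bounded fun q => by
      rw [Real.norm_eq_abs, abs_mul]
      exact mul_le_mul_of_nonneg_left (hf q k) (abs_nonneg _)
  simp_rw [mul_sum]
  exact (Summable.tsum_finsetSum fun k _ => hsum k).symm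

lemma tsum_ite_dvd_add_one {α : Type*} [AddCommMonoid α] [TopologicalSpace α] {d : ℕ}
    (hd : d ≠ 0) (f : ℕ → α) :
    ∑' m : ℕ, (if d ∣ m + 1 then f (m + 1) else 0) = ∑' l : ℕ, f (d * (l + 1)) := by
  have hg : ∀ l, d * (l + 1) - 1 + 1 = d * (l + 1) := fun l =>
    Nat.sub_add_cancel (Nat.one_le_iff_ne_zero.2 (by positivity))
  have hinj : Function.Injective fun l => d * (l + 1) - 1 := fun a b h => by
    have := congrArg (· + 1) h
    simp only [hg] at this
    exact Nat.succ_injective (Nat.eq_of_mul_eq_mul_left (Nat.pos_of_ne_zero hd) this)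
  rw [← hinj.tsum_eq]
  · simp [hg]
  · intro m hm
    obtain ⟨j, hj⟩ : d ∣ m + 1 := by by_contra h; simp [h] at hm
    obtain ⟨l, rfl⟩ : ∃ l, j = l + 1 :=
      Nat.exists_eq_add_one.2 (by rcases j with _ | j <;> simp_all)
    exact ⟨l, by simp only; omega⟩

/-- Zeroth-mode aliasing identity: averaging over the midpoint grid. -/
theorem zeroth_mode_aliasing (c : ℕ → ℝ) (hc : Summable fun q => |c q|)
    (n : ℕ) (hn : 1 ≤ n)
    (u : ℝ → ℝ)
    (hu : ∀ x, u x = c 0 / Real.sqrt Real.pi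
        + ∑' q : ℕ, c (q + 1) * (Real.sqrt (2 / Real.pi) * Real.cos (((q : ℝ) + 1) * x))) :
    (1 / (n : ℝ)) * ∑ k ∈ Finset.Icc 1 n, u (Real.pi * (2 * (k : ℝ) - 1) / (2 * n))
      = c 0 / Real.sqrt Real.pi
        + Real.sqrt (2 / Real.pi) * ∑' l : ℕ, (-1 : ℝ) ^ (l + 1) * c (2 * (l + 1) * n) := by
  have hn0 : n ≠ 0 := by omega
  set s := Real.sqrt (2 / Real.pi)
  have hmode : ∀ q : ℕ, c (q + 1) * ∑ k ∈ Icc 1 n,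
        s * Real.cos (((q : ℝ) + 1) * (Real.pi * (2 * (k : ℝ) - 1) / (2 * n)))
      = n * s * if 2 * n ∣ q + 1 then (-1) ^ ((q + 1) / (2 * n)) * c (q + 1) else 0 := fun q => by
    have h := sum_cos_mul_midpoint hn0 (q + 1)
    push_cast at h
    rw [← mul_sum, h]
    split_ifs <;> ring
  have hbound : ∀ (q : ℕ) (x : ℝ), |s * Real.cos (((q : ℝ) + 1) * x)| ≤ s := fun q x => by
    rw [abs_mul, abs_of_nonneg (Real.sqrt_nonneg _)]
    exact mul_le_of_le_one_right (Real.sqrt_nonneg _) (Real.abs_cos_le_one _)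
  have hsum : ∑ k ∈ Icc 1 n, u (Real.pi * (2 * (k : ℝ) - 1) / (2 * n))
      = n * (c 0 / Real.sqrt Real.pi)
        + n * s * ∑' l : ℕ, (-1) ^ (l + 1) * c (2 * (l + 1) * n) := by
    simp_rw [hu]
    rw [sum_add_distrib, sum_const, Nat.card_Icc, Nat.add_sub_cancel, nsmul_eq_mul,
      sum_tsum_mul_comm_of_abs_le _ ((summable_nat_add_iff 1).2 hc) fun q k => hbound q _,
      tsum_congr hmode, tsum_mul_left,
      tsum_ite_dvd_add_one (by omega) fun m => (-1) ^ (m / (2 * n)) * c m]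
    congr 2
    refine tsum_congr fun l => ?_
    rw [Nat.mul_div_cancel_left _ (by omega), mul_right_comm]
  rw [hsum]
  field_simp
end
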